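/- Any solution (u,p) of the mixed Volterra problem satisfies ‖u‖_{L¹(J;𝒱)} ≤ C₁‖f‖_{L¹(J;𝒱')} + C₂‖g‖_{L¹(J;𝒬')}, where C₁ := (1/α₀)[1 + TM e^{TM}] and C₂ := (1/β)[1 + ‖a‖/α₀][1 + TM e^{TM}] with M := (‖a‖/α₀)C_{k̃} + C_{k₃}. -/

import Mathlib

/-!
Subtracting the memory term, `z(t) = u(t) - ∫₀ᵗ k₃(t,s) u(s) ds` satisfies `B z(t) = g(t)`, and
testing the first equation with `v ∈ ker B` kills the `p`-terms, leaving
`a(z(t), v) = ⟨f(t), v⟩ + a(∫₀ᵗ (k₁ - k₃)(t,s) u(s) ds, v)`. The stationary Brezzi estimate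
(inf-sup lifting of `g(t)` plus coercivity on `ker B`) then bounds `‖u(t)‖` by
`‖f(t)‖ / α₀ + (1 / β)(1 + ‖a‖ / α₀)‖g(t)‖ + M ∫₀ᵗ ‖u‖`, and Grönwall's inequality for
`t ↦ ∫₀ᵗ ‖u‖` gives the factor `e^{TM} ≤ 1 + TM e^{TM}`.
-/

open MeasureTheory Real Set
open scoped ENNReal

noncomputable section

variable {V Q : Type*}
  [NormedAddCommGroup V] [InnerProductSpace ℝ V] [CompleteSpace V]
  [NormedAddCommGroup Q] [InnerProductSpace ℝ Q] [CompleteSpace Q]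

/-- `(u, p)` is a solution of the mixed Volterra problem on `J = [0, T]`:
for a.e. `t ∈ J` and all `(v, q) ∈ 𝒱 × 𝒬`,
`a(u(t),v) + b(v,p(t)) = ⟨f(t),v⟩ + ∫₀ᵗ [k₁(t,s)a(u(s),v) + k₂(t,s)b(v,p(s))] ds` and
`b(u(t),q) = ⟨g(t),q⟩ + ∫₀ᵗ k₃(t,s)b(u(s),q) ds`. -/
def MixedVolterraSol (T : ℝ)
    (a : V →L[ℝ] V →L[ℝ] ℝ) (b : V →L[ℝ] Q →L[ℝ] ℝ)
    (k₁ k₂ k₃ : ℝ → ℝ → ℝ)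
    (f : ℝ → V →L[ℝ] ℝ) (g : ℝ → Q →L[ℝ] ℝ)
    (u : ℝ → V) (p : ℝ → Q) : Prop :=
  ∀ᵐ t ∂(volume.restrict (Icc (0:ℝ) T)),
    (∀ v : V, a (u t) v + b v (p t)
        = f t v + ∫ s in (0:ℝ)..t, (k₁ t s * a (u s) v + k₂ t s * b v (p s))) ∧
    ∀ q : Q, b (u t) q = g t q + ∫ s in (0:ℝ)..t, k₃ t s * b (u s) q

/- `D q` is the Riesz representative of `b(·, q)`. By inf-sup the form `⟪D q, D r⟫` is coercive
on `Q`, so Lax–Milgram gives `z` with `⟪D z, D r⟫ = G r` for all `r`, and `w = D z` works. -/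
open scoped RealInnerProductSpace in
theorem exists_eq_and_norm_le_of_inf_sup (b : V →L[ℝ] Q →L[ℝ] ℝ) {β : ℝ} (hβ : 0 < β)
    (hinf : ∀ q, β * ‖q‖ ≤ ‖b.flip q‖) (G : StrongDual ℝ Q) :
    ∃ w : V, b w = G ∧ ‖w‖ ≤ ‖G‖ / β := by
  set D : Q →L[ℝ] V :=
    (InnerProductSpace.toDual ℝ V).symm.toContinuousLinearEquiv.toContinuousLinearMap ∘L b.flip
  have hD : ∀ q v, ⟪D q, v⟫ = b v q := fun q v => InnerProductSpace.toDual_symm_apply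
  have hDn : ∀ q, β * ‖q‖ ≤ ‖D q‖ := fun q => by
    simpa [D] using hinf q
  have hc : IsCoercive ((innerSL ℝ).bilinearComp D D) := by
    refine ⟨β * β, by positivity, fun q => ?_⟩
    have := mul_le_mul (hDn q) (hDn q) (by positivity) (norm_nonneg _)
    simp only [ContinuousLinearMap.bilinearComp_apply, innerSL_apply_apply,
      real_inner_self_eq_norm_mul_norm]
    linarith
  set z := hc.continuousLinearEquivOfBilin.symm ((InnerProductSpace.toDual ℝ Q).symm G)
  have hz : ∀ r, ⟪D z, D r⟫ = G r := fun r => by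
    simpa [z] using (hc.continuousLinearEquivOfBilin_apply z r).symm
  refine ⟨D z, ContinuousLinearMap.ext fun r => ?_, ?_⟩
  · rw [← hD, real_inner_comm, hz]
  · have hsq : ‖D z‖ * ‖D z‖ ≤ ‖G‖ * ‖z‖ := by
      rw [← real_inner_self_eq_norm_mul_norm, hz]
      exact (le_abs_self _).trans (G.le_opNorm z)
    have hmul : ‖D z‖ * (‖D z‖ * β) ≤ ‖D z‖ * ‖G‖ := by
      nlinarith [hDn z, norm_nonneg G]
    rw [le_div_iff₀ hβ]
    rcases (norm_nonneg (D z)).eq_or_lt with h0 | h0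
    · rw [← h0, zero_mul]
      exact norm_nonneg G
    · exact le_of_mul_le_mul_left hmul h0

theorem norm_le_of_abs_le_on_ker {a : V →L[ℝ] V →L[ℝ] ℝ} {b : V →L[ℝ] Q →L[ℝ] ℝ} {α₀ β : ℝ}
    (hα₀ : 0 < α₀) (hcoer : ∀ v : V, b v = 0 → α₀ * ‖v‖ ^ 2 ≤ a v v)
    (hβ : 0 < β) (hinf : ∀ q : Q, β * ‖q‖ ≤ ‖b.flip q‖)
    {z : V} {R : ℝ} (hR : 0 ≤ R) (hz : ∀ v, b v = 0 → |a z v| ≤ R * ‖v‖) :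
    ‖z‖ ≤ R / α₀ + (1 / β) * (1 + ‖a‖ / α₀) * ‖b z‖ := by
  obtain ⟨w, hw, hwn⟩ := exists_eq_and_norm_le_of_inf_sup b hβ hinf (b z)
  have hker : b (z - w) = 0 := by rw [map_sub, hw, sub_self]
  have hzw : ‖z - w‖ ≤ (R + ‖a‖ * ‖w‖) / α₀ := by
    have hquad : α₀ * ‖z - w‖ ^ 2 ≤ (R + ‖a‖ * ‖w‖) * ‖z - w‖ := calc
      α₀ * ‖z - w‖ ^ 2 ≤ a (z - w) (z - w) := hcoer _ hker
      _ = a z (z - w) - a w (z - w) := by rw [map_sub a z w, sub_apply]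
      _ ≤ |a z (z - w)| + |a w (z - w)| := (le_abs_self _).trans (abs_sub _ _)
      _ ≤ R * ‖z - w‖ + ‖a‖ * ‖w‖ * ‖z - w‖ := add_le_add (hz _ hker) (a.le_opNorm₂ w _)
      _ = (R + ‖a‖ * ‖w‖) * ‖z - w‖ := by ring
    rw [le_div_iff₀ hα₀]
    rcases (norm_nonneg (z - w)).eq_or_lt with h0 | h0
    · rw [← h0, zero_mul]
      positivity
    · nlinarith
  calc ‖z‖ ≤ ‖z - w‖ + ‖w‖ := norm_le_norm_sub_add z w
    _ ≤ (R + ‖a‖ * ‖w‖) / α₀ + ‖w‖ := by gcongr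
    _ = R / α₀ + (1 + ‖a‖ / α₀) * ‖w‖ := by field_simp; ring
    _ ≤ R / α₀ + (1 + ‖a‖ / α₀) * (‖b z‖ / β) := by gcongr
    _ = R / α₀ + (1 / β) * (1 + ‖a‖ / α₀) * ‖b z‖ := by ring

theorem le_mul_exp_of_le_add_mul_integral {φ : ℝ → ℝ} {a b H M : ℝ} (hφ : Continuous φ)
    (hM : 0 ≤ M) (hab : a ≤ b) (hle : ∀ r ∈ Icc a b, φ r ≤ H + M * ∫ s in a..r, φ s) :
    φ b ≤ H * exp (M * (b - a)) := by
  have hΦ : ∀ r ∈ Icc a b, ∫ s in a..r, φ s ≤ gronwallBound 0 M H (r - a) :=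
    le_gronwallBound_of_liminf_deriv_right_le
      (intervalIntegral.continuous_primitive (hφ.intervalIntegrable) a).continuousOn
      (fun x _ r hr => by
        simpa [slope_def_field, div_eq_inv_mul] using
          (hφ.integral_hasStrictDerivAt a x).hasDerivAt.hasDerivWithinAt.liminf_right_slope_le hr)
      intervalIntegral.integral_same.le
      (fun x hx => (hle x (Ico_subset_Icc_self hx)).trans_eq (add_comm _ _))
  calc φ b ≤ H + M * ∫ s in a..b, φ s := hle b ⟨hab, le_rfl⟩
    _ ≤ H + M * gronwallBound 0 M H (b - a) := by gcongr; exact hΦ b ⟨hab, le_rfl⟩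
    _ = H * exp (M * (b - a)) := by
      rcases hM.eq_or_lt with rfl | hM
      · simp [gronwallBound_K0]
      · rw [gronwallBound_of_K_ne_0 hM.ne']
        field_simp
        ring

theorem setIntegral_Icc_le_mul_exp_of_ae_le_add_mul_integral {ψ h : ℝ → ℝ} {a b M : ℝ}
    (hab : a ≤ b) (hM : 0 ≤ M) (hψ : IntegrableOn ψ (Icc a b)) (hh : IntegrableOn h (Icc a b))
    (hh0 : ∀ t, 0 ≤ h t)
    (hle : ∀ᵐ t ∂volume.restrict (Icc a b), ψ t ≤ h t + M * ∫ s in a..t, ψ s) :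
    ∫ t in Icc a b, ψ t ≤ (∫ t in Icc a b, h t) * exp (M * (b - a)) := by
  -- extending `ψ` by zero makes its primitive continuous on all of `ℝ`
  set φ : ℝ → ℝ := fun r => ∫ s in a..r, (Icc a b).indicator ψ s
  have hφ : Continuous φ := intervalIntegral.continuous_primitive
    (fun _ _ => ((integrable_indicator_iff measurableSet_Icc).2 hψ).intervalIntegrable) a
  have hφψ : ∀ r ∈ Icc a b, φ r = ∫ s in a..r, ψ s := fun r hr =>
    intervalIntegral.integral_congr fun s hs => indicator_of_mem
      (Icc_subset_Icc_right hr.2 (uIcc_of_le hr.1 ▸ hs)) ψ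
  have hsub : ∀ r ∈ Icc a b, Icc a r ⊆ Icc a b := fun r hr => Icc_subset_Icc_right hr.2
  have hii : ∀ r ∈ Icc a b, ∀ {f : ℝ → ℝ}, IntegrableOn f (Icc a b) →
      IntervalIntegrable f volume a r := fun r hr f hf =>
    (hf.mono_set (uIcc_of_le hr.1 ▸ hsub r hr)).intervalIntegrable
  have hstep : ∀ r ∈ Icc a b, φ r ≤ (∫ t in Icc a b, h t) + M * ∫ s in a..r, φ s := by
    intro r hr
    have hMφ := (hφ.intervalIntegrable (μ := volume) a r).const_mul M
    have hmono : ψ ≤ᵐ[volume.restrict (Icc a r)] fun t => h t + M * φ t := by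
      filter_upwards [ae_restrict_of_ae_restrict_of_subset (hsub r hr) hle,
        ae_restrict_mem measurableSet_Icc] with t ht htr
      rwa [hφψ t (hsub r hr htr)]
    calc φ r = ∫ s in a..r, ψ s := hφψ r hr
      _ ≤ ∫ s in a..r, (h s + M * φ s) := intervalIntegral.integral_mono_ae_restrict hr.1
          (hii r hr hψ) ((hii r hr hh).add hMφ) hmono
      _ = (∫ s in a..r, h s) + M * ∫ s in a..r, φ s := by
          rw [intervalIntegral.integral_add (hii r hr hh) hMφ, intervalIntegral.integral_const_mul]
      _ ≤ (∫ t in Icc a b, h t) + M * ∫ s in a..r, φ s := by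
          gcongr
          rw [intervalIntegral.integral_of_le hr.1]
          exact setIntegral_mono_set hh (ae_of_all _ hh0)
            (Ioc_subset_Icc_self.trans (hsub r hr)).eventuallyLE
  calc ∫ t in Icc a b, ψ t = φ b := by
        rw [hφψ b ⟨hab, le_rfl⟩, intervalIntegral.integral_of_le hab, integral_Icc_eq_integral_Ioc]
    _ ≤ (∫ t in Icc a b, h t) * exp (M * (b - a)) :=
        le_mul_exp_of_le_add_mul_integral hφ hM hab hstep

theorem Real.exp_le_one_add_mul_exp (x : ℝ) : exp x ≤ 1 + x * exp x := by
  have h := mul_le_mul_of_nonneg_right (add_one_le_exp (-x)) (exp_pos x).le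
  rw [← exp_add, neg_add_cancel, exp_zero] at h
  linarith

theorem ContinuousOn.slice_Icc {k : ℝ → ℝ → ℝ} {T t : ℝ}
    (hk : ContinuousOn (fun ts : ℝ × ℝ => k ts.1 ts.2)
      {ts : ℝ × ℝ | 0 ≤ ts.2 ∧ ts.2 ≤ ts.1 ∧ ts.1 ≤ T}) (ht : t ≤ T) :
    ContinuousOn (k t) (Icc 0 t) :=
  hk.comp (continuous_const.prodMk continuous_id).continuousOn fun _ hs => ⟨hs.1, hs.2, ht⟩

theorem intervalIntegral.norm_integral_smul_le {E : Type*} [NormedAddCommGroup E]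
    [NormedSpace ℝ E] {k : ℝ → ℝ} {w : ℝ → E} {a b C : ℝ} (hab : a ≤ b)
    (hk : ∀ s ∈ Ioc a b, |k s| ≤ C) (hw : IntervalIntegrable (fun s => ‖w s‖) volume a b) :
    ‖∫ s in a..b, k s • w s‖ ≤ C * ∫ s in a..b, ‖w s‖ := by
  rw [← intervalIntegral.integral_const_mul]
  refine intervalIntegral.norm_integral_le_of_norm_le hab (ae_of_all _ fun s hs => ?_)
    (hw.const_mul C)
  rw [norm_smul, Real.norm_eq_abs]
  exact mul_le_mul_of_nonneg_right (hk s hs) (norm_nonneg _)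

theorem MixedVolterraSol.ae_norm_le {T : ℝ} {a : V →L[ℝ] V →L[ℝ] ℝ} {b : V →L[ℝ] Q →L[ℝ] ℝ}
    {k₁ k₂ k₃ : ℝ → ℝ → ℝ} {f : ℝ → V →L[ℝ] ℝ} {g : ℝ → Q →L[ℝ] ℝ} {u : ℝ → V} {p : ℝ → Q}
    (hsol : MixedVolterraSol T a b k₁ k₂ k₃ f g u p) {α₀ β Ck₃ Ckt : ℝ}
    (hα₀ : 0 < α₀) (hcoer : ∀ v : V, b v = 0 → α₀ * ‖v‖ ^ 2 ≤ a v v)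
    (hβ : 0 < β) (hinf : ∀ q : Q, β * ‖q‖ ≤ ‖b.flip q‖)
    (hk₁c : ContinuousOn (fun ts : ℝ × ℝ => k₁ ts.1 ts.2)
      {ts : ℝ × ℝ | 0 ≤ ts.2 ∧ ts.2 ≤ ts.1 ∧ ts.1 ≤ T})
    (hk₃c : ContinuousOn (fun ts : ℝ × ℝ => k₃ ts.1 ts.2)
      {ts : ℝ × ℝ | 0 ≤ ts.2 ∧ ts.2 ≤ ts.1 ∧ ts.1 ≤ T})
    (hk₃b : ∀ t s : ℝ, 0 ≤ s → s ≤ t → t ≤ T → |k₃ t s| ≤ Ck₃) (hCkt : 0 ≤ Ckt)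
    (hktb : ∀ t s : ℝ, 0 ≤ s → s ≤ t → t ≤ T → |k₁ t s - k₃ t s| ≤ Ckt)
    (hu : IntegrableOn u (Icc 0 T)) :
    ∀ᵐ t ∂volume.restrict (Icc 0 T), ‖u t‖ ≤ (1 / α₀) * ‖f t‖
      + (1 / β) * (1 + ‖a‖ / α₀) * ‖g t‖ + (‖a‖ / α₀ * Ckt + Ck₃) * ∫ s in 0..t, ‖u s‖ := by
  filter_upwards [hsol, ae_restrict_mem measurableSet_Icc] with t ⟨hvf, hvg⟩ ⟨ht0, htT⟩
  have hut : IntegrableOn u (uIcc 0 t) :=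
    hu.mono_set (uIcc_of_le ht0 ▸ Icc_subset_Icc_right htT)
  have hku : ∀ {k : ℝ → ℝ → ℝ}, ContinuousOn (fun ts : ℝ × ℝ => k ts.1 ts.2)
      {ts : ℝ × ℝ | 0 ≤ ts.2 ∧ ts.2 ≤ ts.1 ∧ ts.1 ≤ T} →
      IntervalIntegrable (fun s => k t s • u s) volume 0 t := fun hk =>
    (hut.continuousOn_smul (uIcc_of_le ht0 ▸ hk.slice_Icc htT) isCompact_uIcc).intervalIntegrable
  have hcomm : ∀ {k : ℝ → ℝ} (L : V →L[ℝ] ℝ),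
      IntervalIntegrable (fun s => k s • u s) volume 0 t →
      ∫ s in 0..t, k s * L (u s) = L (∫ s in 0..t, k s • u s) := fun L hk => by
    simpa using L.intervalIntegral_comp_comm hk
  set ψ := ∫ s in 0..t, ‖u s‖
  set I := ∫ s in 0..t, k₃ t s • u s
  have hI : ‖I‖ ≤ Ck₃ * ψ := intervalIntegral.norm_integral_smul_le ht0
    (fun s hs => hk₃b t s hs.1.le hs.2 htT) (IntegrableOn.intervalIntegrable hut.norm)
  have hbz : b (u t - I) = g t := by
    ext q
    have := hcomm (b.flip q) (hku hk₃c)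
    simp only [ContinuousLinearMap.flip_apply] at this
    rw [map_sub, sub_apply, hvg q, this, add_sub_cancel_right]
  have haz : ∀ v, b v = 0 → |a (u t - I) v| ≤ (‖f t‖ + ‖a‖ * (Ckt * ψ)) * ‖v‖ := by
    intro v hv
    have hk₁ : a (u t) v = f t v + a (∫ s in 0..t, k₁ t s • u s) v := by
      have := hcomm (a.flip v) (hku hk₁c)
      simp only [ContinuousLinearMap.flip_apply] at this
      simpa [hv, this] using hvf v
    have hdiff : a (u t - I) v = f t v + a (∫ s in 0..t, (k₁ t s - k₃ t s) • u s) v := by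
      simp only [sub_smul, intervalIntegral.integral_sub (hku hk₁c) (hku hk₃c), map_sub,
        sub_apply, hk₁, I]
      ring
    have hK : ‖∫ s in 0..t, (k₁ t s - k₃ t s) • u s‖ ≤ Ckt * ψ :=
      intervalIntegral.norm_integral_smul_le ht0
        (fun s hs => hktb t s hs.1.le hs.2 htT) (IntegrableOn.intervalIntegrable hut.norm)
    calc |a (u t - I) v|
        ≤ ‖f t‖ * ‖v‖ + ‖a‖ * ‖∫ s in 0..t, (k₁ t s - k₃ t s) • u s‖ * ‖v‖ := by
          rw [hdiff]
          exact (abs_add_le _ _).trans (add_le_add ((f t).le_opNorm v) (a.le_opNorm₂ _ v))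
      _ ≤ (‖f t‖ + ‖a‖ * (Ckt * ψ)) * ‖v‖ := by
          rw [add_mul]
          gcongr
  have hψ : 0 ≤ ψ := intervalIntegral.integral_nonneg ht0 fun _ _ => norm_nonneg _
  have hz := norm_le_of_abs_le_on_ker hα₀ hcoer hβ hinf (by positivity) haz
  rw [hbz] at hz
  calc ‖u t‖ ≤ ‖u t - I‖ + ‖I‖ := norm_le_norm_sub_add _ _
    _ ≤ (‖f t‖ + ‖a‖ * (Ckt * ψ)) / α₀ + (1 / β) * (1 + ‖a‖ / α₀) * ‖g t‖ + Ck₃ * ψ :=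
        add_le_add hz hI
    _ = _ := by ring

theorem mixed_volterra_u_estimate
    (T : ℝ) (hT : 0 ≤ T)
    (a : V →L[ℝ] V →L[ℝ] ℝ) (b : V →L[ℝ] Q →L[ℝ] ℝ)
    (α₀ : ℝ) (hα₀ : 0 < α₀)
    (hcoer : ∀ v : V, b v = 0 → α₀ * ‖v‖ ^ 2 ≤ a v v)
    (β : ℝ) (hβ : 0 < β)
    (hinfsup : ∀ q : Q, β * ‖q‖ ≤ ‖b.flip q‖)
    (k₁ k₂ k₃ : ℝ → ℝ → ℝ)
    (hk₁c : ContinuousOn (fun ts : ℝ × ℝ => k₁ ts.1 ts.2)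
      {ts : ℝ × ℝ | 0 ≤ ts.2 ∧ ts.2 ≤ ts.1 ∧ ts.1 ≤ T})
    (hk₃c : ContinuousOn (fun ts : ℝ × ℝ => k₃ ts.1 ts.2)
      {ts : ℝ × ℝ | 0 ≤ ts.2 ∧ ts.2 ≤ ts.1 ∧ ts.1 ≤ T})
    (Ck₃ : ℝ) (hCk₃ : 0 ≤ Ck₃)
    (hk₃b : ∀ t s : ℝ, 0 ≤ s → s ≤ t → t ≤ T → |k₃ t s| ≤ Ck₃)
    (Ckt : ℝ) (hCkt : 0 ≤ Ckt)
    (hktb : ∀ t s : ℝ, 0 ≤ s → s ≤ t → t ≤ T → |k₁ t s - k₃ t s| ≤ Ckt)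
    (f : ℝ → V →L[ℝ] ℝ) (g : ℝ → Q →L[ℝ] ℝ)
    (hf : IntegrableOn f (Icc 0 T)) (hg : IntegrableOn g (Icc 0 T))
    (u : ℝ → V) (p : ℝ → Q)
    (hu : IntegrableOn u (Icc 0 T))
    (hsol : MixedVolterraSol T a b k₁ k₂ k₃ f g u p)
    (M C₁ C₂ : ℝ)
    (hM : M = (‖a‖ / α₀) * Ckt + Ck₃)
    (hC₁ : C₁ = (1 / α₀) * (1 + T * M * exp (T * M)))
    (hC₂ : C₂ = (1 / β) * (1 + ‖a‖ / α₀) * (1 + T * M * exp (T * M))) :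
    (∫ t in Icc (0:ℝ) T, ‖u t‖)
      ≤ C₁ * (∫ t in Icc (0:ℝ) T, ‖f t‖) + C₂ * (∫ t in Icc (0:ℝ) T, ‖g t‖) := by
  have hM0 : 0 ≤ M := by rw [hM]; positivity
  have hpointwise := hsol.ae_norm_le hα₀ hcoer hβ hinfsup hk₁c hk₃c hk₃b hCkt hktb hu
  rw [← hM] at hpointwise
  have hf' := hf.norm.const_mul (1 / α₀)
  have hg' := hg.norm.const_mul ((1 / β) * (1 + ‖a‖ / α₀))
  have hgronwall := setIntegral_Icc_le_mul_exp_of_ae_le_add_mul_integral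
    (h := fun t => (1 / α₀) * ‖f t‖ + (1 / β) * (1 + ‖a‖ / α₀) * ‖g t‖) hT hM0 hu.norm
    (hf'.add hg') (fun t => by positivity) hpointwise
  rw [integral_add hf' hg', integral_const_mul, integral_const_mul, sub_zero] at hgronwall
  set F := ∫ t in Icc (0:ℝ) T, ‖f t‖
  set G := ∫ t in Icc (0:ℝ) T, ‖g t‖
  calc (∫ t in Icc (0:ℝ) T, ‖u t‖)
      ≤ ((1 / α₀) * F + (1 / β) * (1 + ‖a‖ / α₀) * G) * exp (T * M) := by
        rwa [mul_comm T M]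
    _ ≤ ((1 / α₀) * F + (1 / β) * (1 + ‖a‖ / α₀) * G) * (1 + T * M * exp (T * M)) := by
        gcongr
        exact Real.exp_le_one_add_mul_exp _
    _ = C₁ * F + C₂ * G := by rw [hC₁, hC₂]; ring
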